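/- Let S be a closed, totally disconnected subset of [0,∞) containing 0. Then for every q ∈ ℤ≥0 there exists a q-nebula A such that S ⊆ A and every compact connected component of A has nonempty intersection with S. -/

import Mathlib

open Set

/-- A closed subset `A` of `[0,∞)` is a `q`-nebula if it is a disjoint union of closed
intervals `I 0, …, I k` with `0 ∈ I 0`, the intervals `I 0, …, I (k-1)` compact of diameter
`< 2^{-q}`, and `I k` an unbounded closed interval contained in `(q, ∞)`. -/
def IsNebula (q : ℕ) (A : Set ℝ) : Prop :=
  IsClosed A ∧ A ⊆ Set.Ici 0 ∧
  ∃ (k : ℕ) (I : Fin (k + 1) → Set ℝ),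
    A = ⋃ i, I i ∧
    (0 : ℝ) ∈ I 0 ∧
    (∀ i : Fin (k + 1), (i : ℕ) < k →
      ∃ a b : ℝ, a ≤ b ∧ I i = Set.Icc a b ∧ b - a < (2 : ℝ) ^ (-(q : ℤ))) ∧
    (∃ a : ℝ, I (Fin.last k) = Set.Ici a ∧ (q : ℝ) < a) ∧
    Pairwise (Function.onFun Disjoint I)

/-!
The complement of a closed totally disconnected `S ⊆ ℝ` is dense, so there are cut points
`c₀ < c₁ < ⋯ → ∞` outside `S` with consecutive gaps `< 2^{-q}`. The convex hull of each nonempty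
compact piece `S ∩ [cₙ, cₙ₊₁]` is a short interval starting at a point of `S`, and these hulls are
pairwise disjoint because the cuts avoid `S`. Once a cut `c` exceeds `q`, adjoining the ray
`[c, ∞)` to the hulls below `c` gives the nebula; its compact components are the hulls, which
meet `S`.
-/

open Function

theorem IsTotallyDisconnected.exists_mem_Ioo_notMem {α : Type*}
    [ConditionallyCompleteLinearOrder α] [TopologicalSpace α] [OrderTopology α]
    [DenselyOrdered α] {S : Set α} (hS : IsTotallyDisconnected S) {u v : α} (huv : u < v) :
    ∃ t ∈ Ioo u v, t ∉ S := by
  by_contra! h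
  obtain ⟨t, ht⟩ := nonempty_Ioo.mpr huv
  obtain ⟨t', ht'⟩ := nonempty_Ioo.mpr ht.2
  exact ht'.1.ne (hS (Ioo u v) h isPreconnected_Ioo ht ⟨ht.1.trans ht'.1, ht'.2⟩)

theorem Pairwise.disjoint_snoc {α : Type*} {n : ℕ} {I : Fin n → Set α} {J : Set α}
    (hI : Pairwise (Disjoint on I)) (hJ : ∀ i, Disjoint (I i) J) :
    Pairwise (Disjoint on (Fin.snoc I J : Fin (n + 1) → Set α)) := by
  intro i j hij
  induction i using Fin.lastCases with
  | last => induction j using Fin.lastCases with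
    | last => exact absurd rfl hij
    | cast j => simpa [onFun] using (hJ j).symm
  | cast i => induction j using Fin.lastCases with
    | last => simpa [onFun] using hJ i
    | cast j => simpa [onFun] using hI (ne_of_apply_ne Fin.castSucc hij)

structure IsIntervalCoverBelow (S : Set ℝ) (δ c : ℝ) {k : ℕ} (I : Fin (k + 1) → Set ℝ) :
    Prop where
  zero_mem : (0 : ℝ) ∈ I 0
  eq_Icc : ∀ i, ∃ a b, a ≤ b ∧ I i = Icc a b ∧ b - a < δ ∧ a ∈ S ∧ b < c
  pairwise_disjoint : Pairwise (Disjoint on I)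
  inter_Iic_subset : S ∩ Iic c ⊆ ⋃ i, I i

theorem isIntervalCoverBelow_single {S : Set ℝ} (hSsub : S ⊆ Ici 0) (hScl : IsClosed S)
    (hS0 : (0 : ℝ) ∈ S) {δ c : ℝ} (hc0 : 0 ≤ c) (hcδ : c < δ) (hcS : c ∉ S) :
    IsIntervalCoverBelow S δ c (fun _ : Fin 1 => Icc 0 (sSup (S ∩ Iic c))) := by
  have hbdd : BddAbove (S ∩ Iic c) := bddAbove_Iic.mono inter_subset_right
  obtain ⟨hbS, hbc⟩ := (hScl.inter isClosed_Iic).csSup_mem ⟨0, hS0, hc0⟩ hbdd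
  have hb0 : 0 ≤ sSup (S ∩ Iic c) := le_csSup hbdd ⟨hS0, hc0⟩
  have hbc' : sSup (S ∩ Iic c) < c := hbc.lt_of_ne fun h => hcS (h ▸ hbS)
  refine ⟨⟨le_rfl, hb0⟩, fun _ => ⟨0, _, hb0, rfl, by linarith, hS0, hbc'⟩,
    fun i j hij => absurd (Subsingleton.elim (α := Fin 1) i j) hij, fun y hy => ?_⟩
  exact mem_iUnion.2 ⟨0, hSsub hy.1, le_csSup hbdd hy⟩

namespace IsIntervalCoverBelow

variable {S : Set ℝ} {δ c c' : ℝ} {k : ℕ} {I : Fin (k + 1) → Set ℝ}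

theorem disjoint_of_subset_Ici (hI : IsIntervalCoverBelow S δ c I) {J : Set ℝ}
    (hJ : J ⊆ Ici c) (i : Fin (k + 1)) : Disjoint (I i) J := by
  obtain ⟨a, b, -, hIi, -, -, hbc⟩ := hI.eq_Icc i
  rw [hIi]
  exact disjoint_left.2 fun y hy hyJ => (hy.2.trans_lt hbc).not_ge (hJ hyJ)

theorem mono_right (hI : IsIntervalCoverBelow S δ c I) (hcc' : c ≤ c')
    (hgap : S ∩ Icc c c' = ∅) : IsIntervalCoverBelow S δ c' I := by
  refine ⟨hI.zero_mem, fun i => ?_, hI.pairwise_disjoint, fun y hy => ?_⟩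
  · obtain ⟨a, b, hab, hIi, hδ, haS, hbc⟩ := hI.eq_Icc i
    exact ⟨a, b, hab, hIi, hδ, haS, hbc.trans_le hcc'⟩
  · refine hI.inter_Iic_subset ⟨hy.1, (not_lt.1 fun hcy => ?_ : y ≤ c)⟩
    exact hgap.subset ⟨hy.1, hcy.le, hy.2⟩

theorem snoc (hScl : IsClosed S) (hI : IsIntervalCoverBelow S δ c I) (hδ : c' - c < δ)
    (hc' : c' ∉ S) (hT : (S ∩ Icc c c').Nonempty) :
    IsIntervalCoverBelow S δ c'
      (Fin.snoc I (Icc (sInf (S ∩ Icc c c')) (sSup (S ∩ Icc c c')))) := by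
  set T := S ∩ Icc c c'
  have hbdd : BddBelow T ∧ BddAbove T :=
    ⟨bddBelow_Icc.mono inter_subset_right, bddAbove_Icc.mono inter_subset_right⟩
  have hTcl : IsClosed T := hScl.inter isClosed_Icc
  obtain ⟨haS, hca, -⟩ := hTcl.csInf_mem hT hbdd.1
  obtain ⟨hbS, -, hbc'⟩ := hTcl.csSup_mem hT hbdd.2
  have hcc' : c ≤ c' := hca.trans (hbc'.trans' (csInf_le_csSup hT hbdd.1 hbdd.2))
  refine ⟨by simpa using hI.zero_mem, fun i => ?_, ?_, fun y hy => ?_⟩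
  · induction i using Fin.lastCases with
    | last =>
      refine ⟨_, _, csInf_le_csSup hT hbdd.1 hbdd.2, by simp, by linarith, haS, ?_⟩
      exact hbc'.lt_of_ne fun h => hc' (h ▸ hbS)
    | cast i =>
      obtain ⟨a, b, hab, hIi, hδ, haS, hbc⟩ := hI.eq_Icc i
      exact ⟨a, b, hab, by simpa using hIi, hδ, haS, hbc.trans_le hcc'⟩
  · exact hI.pairwise_disjoint.disjoint_snoc
      (hI.disjoint_of_subset_Ici fun y hy => hca.trans hy.1)
  · rw [Set.iUnion_snoc]
    rcases le_or_gt y c with hyc | hcy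
    · exact Or.inl (hI.inter_Iic_subset ⟨hy.1, hyc⟩)
    · exact Or.inr (subset_Icc_csInf_csSup hbdd.1 hbdd.2 ⟨hy.1, hcy.le, hy.2⟩)

theorem exists_extend (hScl : IsClosed S) (hI : IsIntervalCoverBelow S δ c I) (hcc' : c ≤ c')
    (hδ : c' - c < δ) (hc' : c' ∉ S) :
    ∃ k', ∃ I' : Fin (k' + 1) → Set ℝ, IsIntervalCoverBelow S δ c' I' := by
  rcases (S ∩ Icc c c').eq_empty_or_nonempty with hT | hT
  · exact ⟨k, I, hI.mono_right hcc' hT⟩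
  · exact ⟨k + 1, _, hI.snoc hScl hδ hc' hT⟩

theorem subset_union_Ici (hI : IsIntervalCoverBelow S δ c I) : S ⊆ (⋃ i, I i) ∪ Ici c := by
  intro y hy
  rcases le_or_gt y c with hyc | hcy
  · exact Or.inl (hI.inter_Iic_subset ⟨hy, hyc⟩)
  · exact Or.inr hcy.le

theorem isNebula {q : ℕ} (hSsub : S ⊆ Ici 0) (hI : IsIntervalCoverBelow S (2 ^ (-(q : ℤ))) c I)
    (hqc : q < c) : IsNebula q ((⋃ i, I i) ∪ Ici c) := by
  have hIcc : ∀ i, ∃ a b, 0 ≤ a ∧ I i = Icc a b := fun i => by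
    obtain ⟨a, b, -, hIi, -, haS, -⟩ := hI.eq_Icc i
    exact ⟨a, b, hSsub haS, hIi⟩
  refine ⟨(isClosed_iUnion_of_finite fun i => ?_).union isClosed_Ici,
    union_subset (iUnion_subset fun i => ?_) (Ici_subset_Ici.2 ((Nat.cast_nonneg q).trans hqc.le)),
    k + 1, Fin.snoc I (Ici c), (Set.iUnion_snoc _ _).symm, by simpa using hI.zero_mem,
    fun i hi => ?_, ⟨c, by simp, hqc⟩,
    hI.pairwise_disjoint.disjoint_snoc (hI.disjoint_of_subset_Ici subset_rfl)⟩
  · obtain ⟨a, b, -, hIi⟩ := hIcc i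
    exact hIi ▸ isClosed_Icc
  · obtain ⟨a, b, ha, hIi⟩ := hIcc i
    exact hIi ▸ Icc_subset_Ici_self.trans (Ici_subset_Ici.2 ha)
  · obtain ⟨a, b, hab, hIi, hδ, -⟩ := hI.eq_Icc (i.castLT hi)
    exact ⟨a, b, hab, by rw [← Fin.castSucc_castLT i hi, Fin.snoc_castSucc, hIi], hδ⟩

theorem connectedComponentIn_inter_nonempty (hI : IsIntervalCoverBelow S δ c I) {x : ℝ}
    (hx : x ∈ (⋃ i, I i) ∪ Ici c)
    (hcomp : IsCompact (connectedComponentIn ((⋃ i, I i) ∪ Ici c) x)) :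
    (connectedComponentIn ((⋃ i, I i) ∪ Ici c) x ∩ S).Nonempty := by
  set A := (⋃ i, I i) ∪ Ici c
  rcases hx with hx | hx
  · obtain ⟨i, hi⟩ := mem_iUnion.1 hx
    obtain ⟨a, b, hab, hIi, -, haS, -⟩ := hI.eq_Icc i
    rw [hIi] at hi
    have hsub := isPreconnected_Icc.subset_connectedComponentIn (F := A) hi
      (hIi ▸ (subset_iUnion I i).trans subset_union_left)
    exact ⟨a, hsub (left_mem_Icc.2 hab), haS⟩
  · have hsub := isPreconnected_Ici.subset_connectedComponentIn (F := A) hx subset_union_right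
    exact absurd (hcomp.bddAbove.mono hsub) (not_bddAbove_Ici c)

end IsIntervalCoverBelow

theorem exists_isIntervalCoverBelow {S : Set ℝ} (hSsub : S ⊆ Ici 0) (hScl : IsClosed S)
    (hStd : IsTotallyDisconnected S) (hS0 : (0 : ℝ) ∈ S) {δ : ℝ} (hδ : 0 < δ) (R : ℝ) :
    ∃ c, R < c ∧ ∃ k, ∃ I : Fin (k + 1) → Set ℝ, IsIntervalCoverBelow S δ c I := by
  have hgap (n : ℕ) : n * (δ / 2) < (n + 1) * (δ / 2) := by linarith
  choose c hc hcS using fun n : ℕ => hStd.exists_mem_Ioo_notMem (hgap n)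
  have hcover (n : ℕ) : ∃ k, ∃ I : Fin (k + 1) → Set ℝ, IsIntervalCoverBelow S δ (c n) I := by
    induction n with
    | zero =>
      obtain ⟨hc₀, hc₀'⟩ := hc 0
      simp only [CharP.cast_eq_zero, zero_mul, zero_add, one_mul] at hc₀ hc₀'
      exact ⟨0, _, isIntervalCoverBelow_single hSsub hScl hS0 hc₀.le (by linarith) (hcS 0)⟩
    | succ n ih =>
      obtain ⟨k, I, hI⟩ := ih
      obtain ⟨hcn, hcn'⟩ := hc n
      obtain ⟨hcn₁, hcn₁'⟩ := hc (n + 1)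
      push_cast at hcn₁ hcn₁'
      exact hI.exists_extend hScl (by linarith) (by linarith) (hcS _)
  obtain ⟨n, hn⟩ := exists_nat_gt (R / (δ / 2))
  rw [div_lt_iff₀ (by positivity)] at hn
  exact ⟨c n, hn.trans (hc n).1, hcover n⟩

theorem exists_nebula_containing
    (S : Set ℝ) (hSsub : S ⊆ Set.Ici 0) (hScl : IsClosed S)
    (hStd : IsTotallyDisconnected S) (hS0 : (0 : ℝ) ∈ S) (q : ℕ) :
    ∃ A : Set ℝ, IsNebula q A ∧ S ⊆ A ∧
      ∀ x ∈ A, IsCompact (connectedComponentIn A x) →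
        (connectedComponentIn A x ∩ S).Nonempty := by
  obtain ⟨c, hqc, k, I, hI⟩ :=
    exists_isIntervalCoverBelow hSsub hScl hStd hS0 (by positivity : (0 : ℝ) < 2 ^ (-(q : ℤ))) q
  exact ⟨_, hI.isNebula hSsub hqc, hI.subset_union_Ici,
    fun x hx hcomp => hI.connectedComponentIn_inter_nonempty hx hcomp⟩
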